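/- Let 1 ≤ j < n and let S_{j+1} be obtained from an L_j^- PTS by adding a horizontal edge configuration between aisles j and j+1. If, after deleting all vertices of degree zero, S_{j+1} has exactly two connected components and it is not the case that a_{j+1} lies in one of them and b_{j+1} in the other, then 1pass and 2pass are the only vertical edge configurations in aisle j that can be valid for S_{j+1}. -/

import Mathlib

/-- Degree parity class of a vertex: degree zero, odd degree, or even positive degree. -/
inductive DegClass : Type
  | zero : DegClass
  | odd : DegClass
  | evenPos : DegClass
deriving DecidableEq

/-- The parity class of a natural number (a degree). -/
def degClass (d : ℕ) : DegClass :=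
  if d = 0 then .zero else if d % 2 = 1 then .odd else .evenPos

/-- Names of the six vertical edge configurations. -/
inductive VCName : Type
  | onepass : VCName
  | top : VCName
  | bottom : VCName
  | gap : VCName
  | twopass : VCName
  | none : VCName
deriving DecidableEq

/-- Names of the five horizontal edge configurations. -/
inductive HCName : Type
  | h11 : HCName
  | h20 : HCName
  | h02 : HCName
  | h22 : HCName
  | h00 : HCName
deriving DecidableEq

/-- Number of copies of the back cross-aisle edge `a_j a_{j+1}` in a horizontal configuration. -/
def hcA : HCName → ℕ
  | .h11 => 1
  | .h20 => 2
  | .h02 => 0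
  | .h22 => 2
  | .h00 => 0

/-- Number of copies of the front cross-aisle edge `b_j b_{j+1}` in a horizontal configuration. -/
def hcB : HCName → ℕ
  | .h11 => 1
  | .h20 => 0
  | .h02 => 2
  | .h22 => 2
  | .h00 => 0

/-- The seven equivalence classes, as triples (parity of `a_j`, parity of `b_j`, #components). -/
def cUU1C : DegClass × DegClass × ℕ := (.odd, .odd, 1)
def c0E1C : DegClass × DegClass × ℕ := (.zero, .evenPos, 1)
def cE01C : DegClass × DegClass × ℕ := (.evenPos, .zero, 1)
def cEE1C : DegClass × DegClass × ℕ := (.evenPos, .evenPos, 1)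
def cEE2C : DegClass × DegClass × ℕ := (.evenPos, .evenPos, 2)
def c000C : DegClass × DegClass × ℕ := (.zero, .zero, 0)
def c001C : DegClass × DegClass × ℕ := (.zero, .zero, 1)

/-- A single-block parallel-aisle warehouse in the sense of Ratliff and Rosenthal:
`n ≥ 1` vertical pick aisles, two horizontal cross-aisles, `picks j` pick vertices
strictly inside aisle `j`, nonnegative edge lengths, and a depot located at some
cross-aisle vertex `a_j` (if `depotTop`) or `b_j`. -/
structure Warehouse where
  n : ℕ
  npos : 1 ≤ n
  picks : Fin n → ℕ
  vlen : (j : Fin n) → Fin (picks j + 1) → ℝ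
  hlenA : Fin (n - 1) → ℝ
  hlenB : Fin (n - 1) → ℝ
  vlen_nonneg : ∀ j i, 0 ≤ vlen j i
  hlenA_nonneg : ∀ k, 0 ≤ hlenA k
  hlenB_nonneg : ∀ k, 0 ≤ hlenB k
  depotAisle : Fin n
  depotTop : Bool

namespace Warehouse

variable (W : Warehouse)

/-- Vertices of the warehouse graph: in aisle `j`, position `0` is the back cross-aisle
vertex `a_j`, position `picks j + 1` is the front cross-aisle vertex `b_j`, and
positions `1, …, picks j` are the pick vertices of aisle `j`. -/
def V : Type := Σ j : Fin W.n, Fin (W.picks j + 2)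

instance : DecidableEq W.V :=
  inferInstanceAs (DecidableEq (Σ j : Fin W.n, Fin (W.picks j + 2)))

instance : Fintype W.V :=
  inferInstanceAs (Fintype (Σ j : Fin W.n, Fin (W.picks j + 2)))

/-- The back cross-aisle vertex `a_j`. -/
def aV (j : Fin W.n) : W.V := ⟨j, 0⟩

/-- The front cross-aisle vertex `b_j`. -/
def bV (j : Fin W.n) : W.V := ⟨j, Fin.last (W.picks j + 1)⟩

/-- The depot vertex `v₀`. -/
def depot : W.V := if W.depotTop then W.aV W.depotAisle else W.bV W.depotAisle

/-- `v` is a pick vertex, i.e. a vertex strictly inside an aisle. -/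
def IsPick (v : W.V) : Prop := 0 < v.2.val ∧ v.2.val < W.picks v.1 + 1

/-- `v` is a required vertex, i.e. a member of `P` (a pick vertex or the depot). -/
def Required (v : W.V) : Prop := W.IsPick v ∨ v = W.depot

/-- Edges of the warehouse graph: a vertical edge `⟨j, i⟩` joins positions `i` and
`i+1` of aisle `j`; horizontal edges `inr (inl k)` join `a_k a_{k+1}` and
`inr (inr k)` join `b_k b_{k+1}`. -/
def E : Type := (Σ j : Fin W.n, Fin (W.picks j + 1)) ⊕ (Fin (W.n - 1) ⊕ Fin (W.n - 1))

instance : DecidableEq W.E :=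
  inferInstanceAs (DecidableEq ((Σ j : Fin W.n, Fin (W.picks j + 1)) ⊕ (Fin (W.n - 1) ⊕ Fin (W.n - 1))))

instance : Fintype W.E :=
  inferInstanceAs (Fintype ((Σ j : Fin W.n, Fin (W.picks j + 1)) ⊕ (Fin (W.n - 1) ⊕ Fin (W.n - 1))))

/-- The left aisle of a horizontal edge index. -/
def leftAisle (k : Fin (W.n - 1)) : Fin W.n := ⟨k.val, by have := k.isLt; omega⟩

/-- The right aisle of a horizontal edge index. -/
def rightAisle (k : Fin (W.n - 1)) : Fin W.n := ⟨k.val + 1, by have := k.isLt; omega⟩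

/-- Endpoints of an edge. -/
def ends : W.E → W.V × W.V
  | .inl ⟨j, i⟩ => (⟨j, i.castSucc⟩, ⟨j, i.succ⟩)
  | .inr (.inl k) => (W.aV (W.leftAisle k), W.aV (W.rightAisle k))
  | .inr (.inr k) => (W.bV (W.leftAisle k), W.bV (W.rightAisle k))

/-- Length of an edge. -/
def elen : W.E → ℝ
  | .inl ⟨j, i⟩ => W.vlen j i
  | .inr (.inl k) => W.hlenA k
  | .inr (.inr k) => W.hlenB k

/-- A subgraph of `G` is a multiplicity function taking each edge with multiplicity at most 2. -/
def IsSub (T : W.E → ℕ) : Prop := ∀ e, T e ≤ 2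

/-- Degree of a vertex in a subgraph, counting edges with multiplicity. -/
def deg (T : W.E → ℕ) (v : W.V) : ℕ :=
  ∑ e : W.E, T e * ((if (W.ends e).1 = v then 1 else 0) + (if (W.ends e).2 = v then 1 else 0))

/-- Total length of a subgraph, counting edges with multiplicity. -/
def length (T : W.E → ℕ) : ℝ := ∑ e : W.E, (T e : ℝ) * W.elen e

/-- Source of a directed traversal step. -/
def stepSrc (s : W.E × Bool) : W.V := if s.2 then (W.ends s.1).1 else (W.ends s.1).2

/-- Destination of a directed traversal step. -/
def stepDst (s : W.E × Bool) : W.V := if s.2 then (W.ends s.1).2 else (W.ends s.1).1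

/-- A list of directed steps is a closed walk. -/
def IsClosedWalk (l : List (W.E × Bool)) : Prop :=
  l.Chain' (fun s t => W.stepDst s = W.stepSrc t) ∧
  ∀ s ∈ l.head?, ∀ t ∈ l.getLast?, W.stepDst t = W.stepSrc s

/-- `T` is a tour subgraph: every required vertex has positive degree and there is a
closed walk traversing every edge of `T`, counted with multiplicity, exactly once. -/
def IsTour (T : W.E → ℕ) : Prop :=
  W.IsSub T ∧ (∀ v, W.Required v → 0 < W.deg T v) ∧
  ∃ l : List (W.E × Bool), W.IsClosedWalk l ∧ ∀ e : W.E, (l.map Prod.fst).count e = T e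

/-- `T` is an `L` partial tour subgraph: `T` is a subgraph supported on `L` and there is a
subgraph `C` of `G − L` such that `T ∪ C` is a tour subgraph of `G`. -/
def IsPTS (L : Set W.E) (T : W.E → ℕ) : Prop :=
  W.IsSub T ∧ (∀ e ∉ L, T e = 0) ∧
  ∃ C : W.E → ℕ, W.IsSub C ∧ (∀ e ∈ L, C e = 0) ∧ W.IsTour (fun e => T e + C e)

/-- Two `L` PTSs are equivalent: any completion of one is a completion of the other. -/
def EquivPTS (L : Set W.E) (T₁ T₂ : W.E → ℕ) : Prop :=
  ∀ C : W.E → ℕ, W.IsSub C → (∀ e ∈ L, C e = 0) →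
    (W.IsTour (fun e => T₁ e + C e) ↔ W.IsTour (fun e => T₂ e + C e))

/-- The edge set containing the vertical edges of the (0-indexed) aisles `< vmax` and the
horizontal edges with (0-indexed) index `< hmax`.  Thus, in paper (1-indexed) notation,
`L_j = edgesUpTo j (j-1)`, `L_j^- = edgesUpTo (j-1) (j-1)` and `G = edgesUpTo n (n-1)`. -/
def edgesUpTo (vmax hmax : ℕ) : Set W.E := fun e =>
  match e with
  | .inl ⟨i, _⟩ => i.val < vmax
  | .inr (.inl k) => k.val < hmax
  | .inr (.inr k) => k.val < hmax

/-- The simple graph on the vertices of `G` induced by the edges of positive multiplicity. -/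
def sgraph (T : W.E → ℕ) : SimpleGraph W.V where
  Adj v w := v ≠ w ∧ ∃ e, 0 < T e ∧
    (((W.ends e).1 = v ∧ (W.ends e).2 = w) ∨ ((W.ends e).1 = w ∧ (W.ends e).2 = v))
  symm := by
    constructor
    intro v w hvw
    obtain ⟨hne, e, he, hor⟩ := hvw
    exact ⟨hne.symm, e, he, hor.symm⟩
  loopless := by constructor; intro v h; exact h.1 rfl

/-- Number of connected components of a subgraph after deleting all vertices of degree zero. -/
noncomputable def numComp (T : W.E → ℕ) : ℕ :=
  Nat.card ((W.sgraph T).induce {v : W.V | 0 < W.deg T v}).ConnectedComponent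

/-- `v` and `w` both have positive degree but lie in different connected components of `T`. -/
def SepComp (T : W.E → ℕ) (v w : W.V) : Prop :=
  0 < W.deg T v ∧ 0 < W.deg T w ∧ ¬ (W.sgraph T).Reachable v w

/-- The equivalence class of a subgraph relative to the cross-aisle vertices of aisle `j`:
the degree parities of `a_j` and `b_j` and the number of nonempty connected components. -/
noncomputable def classOf (T : W.E → ℕ) (j : Fin W.n) : DegClass × DegClass × ℕ :=
  (degClass (W.deg T (W.aV j)), degClass (W.deg T (W.bV j)), W.numComp T)

theorem exists_gapIdx (j : Fin W.n) :
    ∃ g : Fin (W.picks j + 1), ∀ i, W.vlen j i ≤ W.vlen j g := by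
  obtain ⟨g, -, hg⟩ :=
    Finset.exists_max_image (Finset.univ : Finset (Fin (W.picks j + 1))) (W.vlen j)
      ⟨0, Finset.mem_univ 0⟩
  exact ⟨g, fun i => hg i (Finset.mem_univ i)⟩

/-- The vertical edge of aisle `j` of maximum length: the edge omitted by the `gap`
configuration (which leaves the largest section of the aisle unconnected). -/
noncomputable def gapIdx (j : Fin W.n) : Fin (W.picks j + 1) := (W.exists_gapIdx j).choose

theorem gapIdx_spec (j : Fin W.n) : ∀ i, W.vlen j i ≤ W.vlen j (W.gapIdx j) :=
  (W.exists_gapIdx j).choose_spec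

/-- The multiplicity of the `i`-th vertical edge of aisle `j` in each of the six vertical
edge configurations. -/
noncomputable def vconfFun (j : Fin W.n) (c : VCName) (i : Fin (W.picks j + 1)) : ℕ :=
  match c with
  | .onepass => 1
  | .top => if i.val < W.picks j then 2 else 0
  | .bottom => if 1 ≤ i.val then 2 else 0
  | .gap => if i = W.gapIdx j then 0 else 2
  | .twopass => 2
  | .none => 0

/-- A vertical edge configuration in aisle `j`, as a subgraph of `G`. -/
noncomputable def vcSub (j : Fin W.n) (c : VCName) : W.E → ℕ := fun e =>
  match e with
  | .inl ⟨i, x⟩ =>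
      if h : i = j then W.vconfFun j c ⟨x.val, by exact h ▸ x.isLt⟩ else 0
  | .inr _ => 0

/-- A horizontal edge configuration between aisles `k` and `k+1`, as a subgraph of `G`. -/
def hcSub (k : Fin (W.n - 1)) (c : HCName) : W.E → ℕ := fun e =>
  match e with
  | .inl _ => 0
  | .inr (.inl k') => if k' = k then hcA c else 0
  | .inr (.inr k') => if k' = k then hcB c else 0

end Warehouse

/-!
Every configuration other than `1pass` and `2pass` misses some vertical edge `z` of aisle `j`.
Of the two components of `S_{j+1}`, one, `K`, avoids `a_{j+1}` and `b_{j+1}` and hence lies in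
aisles `≤ j`, meeting aisle `j` at most in `a_j`, `b_j`. Fold aisle `j` onto its ends, sending the
positions `≤ z` to `a_j` and the others to `b_j`. The preimage of `K` under this fold is closed
under adjacency in every completion to a tour: edges of `S_{j+1}` stay inside `K`, the remaining
vertical edges of aisle `j` do not cross the cut at `z`, and the completing edges lie in aisles
`≥ j + 1`. Since it misses the other component, the completed tour would be disconnected.
-/

namespace SimpleGraph

variable {α : Type*} {G : SimpleGraph α}

theorem Reachable.mem_of_adj_closed {X : Set α} (hX : ∀ ⦃a b⦄, a ∈ X → G.Adj a b → b ∈ X)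
    {u v : α} (h : G.Reachable u v) (hu : u ∈ X) : v ∈ X := by
  obtain ⟨p⟩ := h
  induction p with
  | nil => exact hu
  | cons had _ ih => exact ih (hX hu had)

theorem Reachable.induce_of_adj {s : Set α} (hs : ∀ ⦃a b⦄, G.Adj a b → a ∈ s ∧ b ∈ s)
    {u v : α} (h : G.Reachable u v) (hu : u ∈ s) (hv : v ∈ s) :
    (G.induce s).Reachable ⟨u, hu⟩ ⟨v, hv⟩ := by
  obtain ⟨p⟩ := h
  induction p with
  | nil => rfl
  | cons had _ ih =>
    exact (Adj.reachable (show (G.induce s).Adj ⟨_, hu⟩ ⟨_, (hs had).2⟩ from had)).trans (ih _ hv)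

theorem exists_component_avoiding_of_card_eq_two {s : Set α}
    (hs : ∀ ⦃a b⦄, G.Adj a b → a ∈ s ∧ b ∈ s)
    (hcard : Nat.card (G.induce s).ConnectedComponent = 2) {a b : α}
    (hab : ¬ (a ∈ s ∧ b ∈ s ∧ ¬ G.Reachable a b)) :
    ∃ w ∈ s, ∃ u ∈ s, ¬ G.Reachable w u ∧ ¬ G.Reachable w a ∧ ¬ G.Reachable w b := by
  have hclosed : ∀ ⦃x y⦄, x ∈ s → G.Adj x y → y ∈ s := fun _ _ _ h => (hs h).2
  obtain ⟨x, y, hxy, -⟩ := Nat.card_eq_two_iff.mp hcard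
  obtain ⟨⟨v₁, hv₁⟩, rfl⟩ := x.exists_rep
  obtain ⟨⟨v₂, hv₂⟩, rfl⟩ := y.exists_rep
  have hv₁₂ : ¬ G.Reachable v₁ v₂ := fun h =>
    hxy (ConnectedComponent.sound (h.induce_of_adj hs hv₁ hv₂))
  have cross : ∀ ⦃x y⦄, x ∈ s → y ∈ s → G.Reachable x a → G.Reachable y b →
      G.Reachable x y := by
    intro x y hx hy hxa hyb
    have hab' : G.Reachable a b := by
      by_contra h
      exact hab ⟨hxa.mem_of_adj_closed hclosed hx, hyb.mem_of_adj_closed hclosed hy, h⟩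
    exact hxa.trans (hab'.trans hyb.symm)
  by_cases h₁ : G.Reachable v₁ a ∨ G.Reachable v₁ b
  · refine ⟨v₂, hv₂, v₁, hv₁, fun h => hv₁₂ h.symm, fun h₂ => ?_, fun h₂ => ?_⟩ <;>
    rcases h₁ with h₁ | h₁
    · exact hv₁₂ (h₁.trans h₂.symm)
    · exact hv₁₂ (cross hv₂ hv₁ h₂ h₁).symm
    · exact hv₁₂ (cross hv₁ hv₂ h₁ h₂)
    · exact hv₁₂ (h₁.trans h₂.symm)
  · exact ⟨v₁, hv₁, v₂, hv₂, hv₁₂, not_or.mp h₁⟩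

end SimpleGraph

namespace Warehouse

open SimpleGraph

variable {W : Warehouse}

theorem deg_pos_iff {T : W.E → ℕ} {v : W.V} :
    0 < W.deg T v ↔ ∃ e, 0 < T e ∧ ((W.ends e).1 = v ∨ (W.ends e).2 = v) := by
  simp [deg, Finset.sum_pos_iff, Nat.pos_iff_ne_zero]

theorem deg_pos_of_adj {T : W.E → ℕ} {v x : W.V} (h : (W.sgraph T).Adj v x) :
    0 < W.deg T v ∧ 0 < W.deg T x := by
  obtain ⟨-, e, he, hends⟩ := h
  exact ⟨deg_pos_iff.mpr ⟨e, he, by tauto⟩, deg_pos_iff.mpr ⟨e, he, by tauto⟩⟩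

theorem IsTour.reachable {T : W.E → ℕ} (hT : W.IsTour T) {v u : W.V}
    (hv : 0 < W.deg T v) (hu : 0 < W.deg T u) : (W.sgraph T).Reachable v u := by
  obtain ⟨-, -, l, ⟨hchain, -⟩, hcount⟩ := hT
  have hstep : ∀ s ∈ l, (W.sgraph T).Reachable (W.stepSrc s) (W.stepDst s) := by
    rintro ⟨e, b⟩ hs
    have he : 0 < T e := hcount e ▸ List.count_pos_iff.mpr (List.mem_map_of_mem hs)
    by_cases hne : W.stepSrc (e, b) = W.stepDst (e, b)
    · exact hne ▸ Reachable.refl _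
    · refine Adj.reachable ⟨hne, e, he, ?_⟩
      cases b <;> simp [stepSrc, stepDst]
  have hnear : ∀ x, 0 < W.deg T x → ∃ s ∈ l, (W.sgraph T).Reachable (W.stepSrc s) x := by
    intro x hx
    obtain ⟨e, he, hends⟩ := deg_pos_iff.mp hx
    obtain ⟨⟨e, b⟩, hs, rfl⟩ := List.mem_map.mp (List.count_pos_iff.mp (hcount e ▸ he))
    refine ⟨(e, b), hs, ?_⟩
    cases b <;> rcases hends with rfl | rfl
    exacts [hstep _ hs, .rfl, .rfl, hstep _ hs]
  obtain ⟨s₀, hs₀⟩ : ∃ s₀, l.head? = some s₀ := by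
    obtain ⟨s, hs, -⟩ := hnear v hv
    exact ⟨l.head (List.ne_nil_of_mem hs), List.head?_eq_some_head _⟩
  have hfrom : ∀ s ∈ l, (W.sgraph T).Reachable (W.stepSrc s₀) (W.stepSrc s) :=
    (List.IsChain.iff_mem.mp hchain).induction _ l
      (fun x y ⟨hx, _, hxy⟩ h => hxy ▸ h.trans (hstep x hx))
      (fun hl => by rw [List.head?_eq_some_head hl, Option.some_inj] at hs₀; rw [hs₀])
  obtain ⟨s, hs, hsv⟩ := hnear v hv
  obtain ⟨t, ht, htu⟩ := hnear u hu
  exact hsv.symm.trans ((hfrom s hs).symm.trans ((hfrom t ht).trans htu))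

theorem deg_mono {T₁ T₂ : W.E → ℕ} (h : ∀ e, T₁ e ≤ T₂ e) (v : W.V) :
    W.deg T₁ v ≤ W.deg T₂ v :=
  Finset.sum_le_sum fun e _ => Nat.mul_le_mul_right _ (h e)

theorem eq_aV_or_eq_bV_of_not_isPick {v : W.V} (hv : ¬ W.IsPick v) :
    v = W.aV v.1 ∨ v = W.bV v.1 := by
  obtain ⟨i, p⟩ := v
  simp only [IsPick, not_and_or, not_lt] at hv
  rcases hv with hp | hp
  · exact Or.inl (Sigma.ext rfl (heq_of_eq (Fin.ext (by simp only [aV, Fin.val_zero]; omega))))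
  · exact Or.inr (Sigma.ext rfl (heq_of_eq (Fin.ext (by simp only [bV, Fin.val_last]; omega))))

theorem not_isPick_aV (i : Fin W.n) : ¬ W.IsPick (W.aV i) := fun h => (lt_irrefl 0) h.1

theorem not_isPick_bV (i : Fin W.n) : ¬ W.IsPick (W.bV i) := fun h => (lt_irrefl _) h.2

theorem fst_ends_of_mem_edgesUpTo {m : ℕ} {e : W.E} (he : e ∈ W.edgesUpTo m (m + 1)) {v : W.V}
    (hv : (W.ends e).1 = v ∨ (W.ends e).2 = v) :
    v.1.val < m ∨ (v.1.val ≤ m + 1 ∧ ¬ W.IsPick v) := by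
  obtain ⟨i, x⟩ | k | k := e
  · have he : i.val < m := he
    rcases hv with rfl | rfl <;> exact Or.inl he
  · have he : k.val < m + 1 := he
    rcases hv with rfl | rfl
    · exact Or.inr ⟨show k.val ≤ m + 1 by omega, not_isPick_aV _⟩
    · exact Or.inr ⟨show k.val + 1 ≤ m + 1 by omega, not_isPick_aV _⟩
  · have he : k.val < m + 1 := he
    rcases hv with rfl | rfl
    · exact Or.inr ⟨show k.val ≤ m + 1 by omega, not_isPick_bV _⟩
    · exact Or.inr ⟨show k.val + 1 ≤ m + 1 by omega, not_isPick_bV _⟩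

theorem le_fst_ends_of_not_mem_edgesUpTo {m : ℕ} {e : W.E} (he : e ∉ W.edgesUpTo m m)
    {v : W.V} (hv : (W.ends e).1 = v ∨ (W.ends e).2 = v) : m ≤ v.1.val := by
  obtain ⟨i, x⟩ | k | k := e
  · have he : ¬ i.val < m := he
    rcases hv with rfl | rfl <;> exact not_lt.mp he
  · have he : ¬ k.val < m := he
    rcases hv with rfl | rfl
    · exact show m ≤ k.val by omega
    · exact show m ≤ k.val + 1 by omega
  · have he : ¬ k.val < m := he
    rcases hv with rfl | rfl
    · exact show m ≤ k.val by omega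
    · exact show m ≤ k.val + 1 by omega

theorem edgesUpTo_mono {v v' h h' : ℕ} (hv : v ≤ v') (hh : h ≤ h') :
    W.edgesUpTo v h ⊆ W.edgesUpTo v' h' := by
  rintro (⟨i, x⟩ | k | k) he
  · exact lt_of_lt_of_le (show i.val < v from he) hv
  · exact lt_of_lt_of_le (show k.val < h from he) hh
  · exact lt_of_lt_of_le (show k.val < h from he) hh

theorem hcSub_eq_zero_of_not_mem {k : Fin (W.n - 1)} {c : HCName} {vmax : ℕ} {e : W.E}
    (he : e ∉ W.edgesUpTo vmax (k.val + 1)) : W.hcSub k c e = 0 := by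
  obtain _ | k' | k' := e
  · rfl
  · exact if_neg fun hk => he (show k'.val < k.val + 1 by rw [hk]; omega)
  · exact if_neg fun hk => he (show k'.val < k.val + 1 by rw [hk]; omega)

theorem exists_vconfFun_eq_zero (j : Fin W.n) {c : VCName} (h₁ : c ≠ .onepass)
    (h₂ : c ≠ .twopass) : ∃ z, W.vconfFun j c z = 0 := by
  cases c
  · exact absurd rfl h₁
  · exact ⟨Fin.last _, by simp [vconfFun]⟩
  · exact ⟨0, by simp [vconfFun]⟩
  · exact ⟨W.gapIdx j, by simp [vconfFun]⟩
  · exact absurd rfl h₂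
  · exact ⟨0, rfl⟩

theorem exists_eq_inl_of_vcSub_pos {j : Fin W.n} {c : VCName} {e : W.E}
    (he : 0 < W.vcSub j c e) : ∃ i, e = .inl ⟨j, i⟩ ∧ 0 < W.vconfFun j c i := by
  obtain ⟨i, x⟩ | k | k := e
  · by_cases hij : i = j
    · subst hij
      have hx : W.vcSub i c (.inl ⟨i, x⟩) = W.vconfFun i c x := dif_pos rfl
      exact ⟨x, rfl, hx ▸ he⟩
    · exact absurd (show W.vcSub j c (.inl ⟨i, x⟩) = 0 from dif_neg hij) he.ne'
  · exact absurd he (lt_irrefl 0)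
  · exact absurd he (lt_irrefl 0)

def foldAisle (j : Fin W.n) (z : Fin (W.picks j + 1)) (v : W.V) : W.V :=
  if v.1 = j then (if v.2.val ≤ z.val then W.aV v.1 else W.bV v.1) else v

section foldAisle

variable {j : Fin W.n} {z : Fin (W.picks j + 1)}

theorem fst_foldAisle (v : W.V) : (W.foldAisle j z v).1 = v.1 := by
  unfold foldAisle
  split_ifs <;> rfl

theorem foldAisle_of_fst_ne {v : W.V} (hv : v.1 ≠ j) : W.foldAisle j z v = v := if_neg hv

theorem foldAisle_of_not_isPick {v : W.V} (hv : ¬ W.IsPick v) : W.foldAisle j z v = v := by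
  obtain ⟨i, p⟩ := v
  by_cases hij : i = j
  · subst hij
    rcases eq_aV_or_eq_bV_of_not_isPick hv with h | h <;> rw [h]
    · exact (if_pos rfl).trans (if_pos (Nat.zero_le _))
    · exact (if_pos rfl).trans (if_neg (by simp only [bV, Fin.val_last]; omega))
  · exact foldAisle_of_fst_ne hij

theorem foldAisle_ends_inl {i : Fin (W.picks j + 1)} (hi : i ≠ z) :
    W.foldAisle j z (W.ends (.inl ⟨j, i⟩)).1 = W.foldAisle j z (W.ends (.inl ⟨j, i⟩)).2 := by
  have hi' : i.val ≠ z.val := fun h => hi (Fin.ext h)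
  show (if j = j then (if i.val ≤ z.val then W.aV j else W.bV j) else _) =
    (if j = j then (if i.val + 1 ≤ z.val then W.aV j else W.bV j) else _)
  rw [if_pos rfl, if_pos rfl]
  split_ifs <;> first | rfl | omega

end foldAisle

section component

variable {j : Fin W.n} {S : W.E → ℕ}

theorem fst_lt_or_not_isPick_of_deg_pos
    (hS : ∀ e ∉ W.edgesUpTo j.val (j.val + 1), S e = 0) {v : W.V} (hv : 0 < W.deg S v) :
    v.1.val < j.val ∨ (v.1.val ≤ j.val + 1 ∧ ¬ W.IsPick v) := by
  obtain ⟨e, he, hends⟩ := deg_pos_iff.mp hv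
  have hmem : e ∈ W.edgesUpTo j.val (j.val + 1) := by
    by_contra h
    exact he.ne' (hS e h)
  exact fst_ends_of_mem_edgesUpTo hmem hends

theorem foldAisle_of_deg_pos
    (hS : ∀ e ∉ W.edgesUpTo j.val (j.val + 1), S e = 0) {z : Fin (W.picks j + 1)} {v : W.V}
    (hv : 0 < W.deg S v) : W.foldAisle j z v = v := by
  rcases fst_lt_or_not_isPick_of_deg_pos hS hv with h | ⟨-, h⟩
  · exact foldAisle_of_fst_ne fun hj => by rw [hj] at h; exact lt_irrefl _ h
  · exact foldAisle_of_not_isPick h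

theorem fst_le_of_reachable (hj : j.val + 1 < W.n)
    (hS : ∀ e ∉ W.edgesUpTo j.val (j.val + 1), S e = 0) {w v : W.V} (hw : 0 < W.deg S w)
    (hwa : ¬ (W.sgraph S).Reachable w (W.aV ⟨j.val + 1, hj⟩))
    (hwb : ¬ (W.sgraph S).Reachable w (W.bV ⟨j.val + 1, hj⟩))
    (hwv : (W.sgraph S).Reachable w v) : v.1.val ≤ j.val := by
  have hv : 0 < W.deg S v := hwv.mem_of_adj_closed (fun _ _ _ h => (deg_pos_of_adj h).2) hw
  rcases fst_lt_or_not_isPick_of_deg_pos hS hv with h | ⟨h, hpick⟩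
  · exact h.le
  · by_contra hlt
    have hv₁ : v.1 = ⟨j.val + 1, hj⟩ := Fin.ext (show v.1.val = j.val + 1 by omega)
    rcases eq_aV_or_eq_bV_of_not_isPick hpick with hvab | hvab <;> rw [hv₁] at hvab
    · exact hwa (hvab ▸ hwv)
    · exact hwb (hvab ▸ hwv)

theorem not_isPTS_of_component_avoiding (hj : j.val + 1 < W.n)
    (hS : ∀ e ∉ W.edgesUpTo j.val (j.val + 1), S e = 0) {z : Fin (W.picks j + 1)}
    {F : W.E → ℕ} (hF : ∀ e, 0 < F e → ∃ i ≠ z, e = .inl ⟨j, i⟩) {w u : W.V}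
    (hw : 0 < W.deg S w) (hu : 0 < W.deg S u) (hwu : ¬ (W.sgraph S).Reachable w u)
    (hwa : ¬ (W.sgraph S).Reachable w (W.aV ⟨j.val + 1, hj⟩))
    (hwb : ¬ (W.sgraph S).Reachable w (W.bV ⟨j.val + 1, hj⟩)) :
    ¬ W.IsPTS (W.edgesUpTo (j.val + 1) (j.val + 1)) (fun e => S e + F e) := by
  rintro ⟨-, -, C, -, hC, htour⟩
  set X : Set W.V := W.foldAisle j z ⁻¹' {v | (W.sgraph S).Reachable w v}
  have hclosed : ∀ ⦃a b⦄, a ∈ X → (W.sgraph (fun e => S e + F e + C e)).Adj a b → b ∈ X := by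
    rintro a b ha ⟨hne, e, he, hends⟩
    replace he : 0 < S e + F e + C e := he
    rcases (show 0 < S e ∨ 0 < F e ∨ 0 < C e by omega) with hSe | hFe | hCe
    · have ha' : 0 < W.deg S a := deg_pos_iff.mpr ⟨e, hSe, by tauto⟩
      have hb' : 0 < W.deg S b := deg_pos_iff.mpr ⟨e, hSe, by tauto⟩
      simp only [X, Set.mem_preimage, Set.mem_ofPred_eq, foldAisle_of_deg_pos hS ha',
        foldAisle_of_deg_pos hS hb'] at ha ⊢
      exact ha.trans (Adj.reachable ⟨hne, e, hSe, hends⟩)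
    · obtain ⟨i, hiz, rfl⟩ := hF e hFe
      have hfold := foldAisle_ends_inl (W := W) hiz
      rcases hends with ⟨rfl, rfl⟩ | ⟨rfl, rfl⟩
      · exact Set.mem_preimage.mpr (hfold ▸ ha)
      · exact Set.mem_preimage.mpr (hfold.symm ▸ ha)
    · have he : e ∉ W.edgesUpTo (j.val + 1) (j.val + 1) := fun h => hCe.ne' (hC e h)
      have hlow := le_fst_ends_of_not_mem_edgesUpTo he (by tauto : _ ∨ (W.ends e).2 = a)
      have hhigh := fst_le_of_reachable hj hS hw hwa hwb ha
      rw [fst_foldAisle] at hhigh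
      omega
  have hmono : ∀ v, W.deg S v ≤ W.deg (fun e => S e + F e + C e) v :=
    deg_mono fun e => by omega
  have hwu' := htour.reachable (lt_of_lt_of_le hw (hmono w)) (lt_of_lt_of_le hu (hmono u))
  have huX : u ∈ X := hwu'.mem_of_adj_closed hclosed
    (show (W.sgraph S).Reachable w (W.foldAisle j z w) by
      rw [foldAisle_of_deg_pos hS hw])
  simp only [X, Set.mem_preimage, Set.mem_ofPred_eq, foldAisle_of_deg_pos hS hu] at huX
  exact hwu huX

end component

end Warehouse

/-- Corollary 3: if `S_{j+1}` has exactly two nonempty connected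
components and it is not the case that `a_{j+1}` lies in one and `b_{j+1}` in the other,
then `1pass` and `2pass` are the only vertical configurations in aisle `j` that can be
valid for `S_{j+1}`. -/
theorem stmt7 (W : Warehouse) (j : Fin W.n) (hj : j.val + 1 < W.n)
    (T : W.E → ℕ) (hT : W.IsPTS (W.edgesUpTo j.val j.val) T)
    (h : HCName)
    (S : W.E → ℕ) (hS : S = fun e => T e + W.hcSub ⟨j.val, by omega⟩ h e)
    (hcomp : W.numComp S = 2)
    (hsep : ¬ W.SepComp S (W.aV ⟨j.val + 1, hj⟩) (W.bV ⟨j.val + 1, hj⟩)) :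
    ∀ c : VCName, c ≠ VCName.onepass → c ≠ VCName.twopass →
      ¬ W.IsPTS (W.edgesUpTo (j.val + 1) (j.val + 1)) (fun e => S e + W.vcSub j c e) := by
  intro c hc₁ hc₂
  obtain ⟨z, hz⟩ := W.exists_vconfFun_eq_zero j hc₁ hc₂
  have hSsupp : ∀ e ∉ W.edgesUpTo j.val (j.val + 1), S e = 0 := fun e he => by
    have hTe := hT.2.1 e fun h => he (Warehouse.edgesUpTo_mono le_rfl j.val.le_succ h)
    simp only [hS, hTe, Warehouse.hcSub_eq_zero_of_not_mem (k := ⟨j.val, by omega⟩) he]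
  have hF : ∀ e, 0 < W.vcSub j c e → ∃ i ≠ z, e = .inl ⟨j, i⟩ := fun e he =>
    let ⟨i, hi, hpos⟩ := Warehouse.exists_eq_inl_of_vcSub_pos he
    ⟨i, fun hiz => hpos.ne' (hiz ▸ hz), hi⟩
  obtain ⟨w, hw, u, hu, hwu, hwa, hwb⟩ := (W.sgraph S).exists_component_avoiding_of_card_eq_two
    (fun _ _ hadj => Warehouse.deg_pos_of_adj hadj) hcomp hsep
  exact Warehouse.not_isPTS_of_component_avoiding hj hSsupp hF hw hu hwu hwa hwb
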